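/- The number of distinct odd diagrams of permutations in S_n is at least the n-th Bell number B_n. -/

import Mathlib

def oddDiagram {n : ℕ} (w : Equiv.Perm (Fin n)) : Finset (Fin n × Fin n) :=
  Finset.univ.filter (fun p => (p.2 : ℕ) < (w p.1 : ℕ) ∧ (p.1 : ℕ) < (w.symm p.2 : ℕ) ∧
    (p.1 : ℕ) % 2 ≠ (w.symm p.2 : ℕ) % 2)

def invLength {n : ℕ} (w : Equiv.Perm (Fin n)) : ℕ :=
  (Finset.univ.filter (fun p : Fin n × Fin n => p.1 < p.2 ∧ w p.2 < w p.1)).card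

def bruhatLE {n : ℕ} : Equiv.Perm (Fin n) → Equiv.Perm (Fin n) → Prop :=
  Relation.ReflTransGen (fun u v => ∃ t : Equiv.Perm (Fin n), t.IsSwap ∧ v = u * t ∧ invLength u < invLength v)

def contains213 {n : ℕ} (w : Equiv.Perm (Fin n)) : Prop :=
  ∃ i h j : Fin n, i < h ∧ h < j ∧ w h < w i ∧ w i < w j

def contains312 {n : ℕ} (w : Equiv.Perm (Fin n)) : Prop :=
  ∃ i h j : Fin n, i < h ∧ h < j ∧ w h < w j ∧ w j < w i

def bell : ℕ → ℕ
  | 0 => 1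
  | (n+1) => ∑ k ∈ (Finset.range (n+1)).attach, Nat.choose n k.1 * bell k.1
decreasing_by exact Nat.lt_succ_of_le (Nat.le_of_lt_succ (Finset.mem_range.mp k.2))

/-!
A permutation avoiding 3-12 is recovered from its odd diagram, position by position: if the column
of a value `x` is nonempty, its last cell lies in the row just above `w⁻¹ x`; if it is empty, `x`
is a left-to-right maximum, and among the values not yet placed only one can be a left-to-right
maximum at the current position.

There are at least `B n` avoiders, following `B (m + 1) = ∑ k, (m choose k) B k`: an avoider of
`S_k` written on a `k`-subset of the values `< m`, followed by `m` and then the remaining values in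
decreasing order, is an avoider of `S_(m+1)`, and it determines the subset and the avoider.
-/

open Finset Equiv

variable {n : ℕ}

/-- `w` contains the vincular pattern 3-12: the letters playing 1 and 2 are adjacent. -/
def contains3_12 (w : Perm (Fin n)) : Prop :=
  ∃ a b c : Fin n, a < b ∧ (c : ℕ) = b + 1 ∧ w b < w c ∧ w c < w a

instance : DecidablePred (contains3_12 (n := n)) := fun w => by
  unfold contains3_12; infer_instance

theorem mem_oddDiagram {w : Perm (Fin n)} {i x : Fin n} :
    (i, x) ∈ oddDiagram w ↔ x < w i ∧ i < w.symm x ∧ (i : ℕ) % 2 ≠ (w.symm x : ℕ) % 2 := by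
  simp only [oddDiagram, mem_filter, mem_univ, true_and]
  rfl

section Avoiding

variable {u w : Perm (Fin n)}

theorem exists_mem_oddDiagram_of_lt (hw : ¬ contains3_12 w) {i x : Fin n}
    (hi : i < w.symm x) (hx : x < w i) :
    ∃ r : Fin n, (r : ℕ) + 1 = w.symm x ∧ (r, x) ∈ oddDiagram w := by
  set p := w.symm x
  have hwp : w p = x := w.apply_symm_apply x
  have hp : (i : ℕ) < p := hi
  let b : Fin n := ⟨p - 1, by omega⟩
  have hbp : (b : ℕ) + 1 = p := by simp only [b]; omega
  have hxb : x < w b := by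
    by_contra! hbx
    have hbx : w b < x := lt_of_le_of_ne hbx fun h => by
      have := congrArg Fin.val (w.injective (h.trans hwp.symm)); omega
    have hib : i < b := lt_of_le_of_ne (Fin.le_def.2 (by omega)) fun h => by
      have := hbx.trans hx
      rw [h] at this
      exact lt_irrefl _ this
    exact hw ⟨i, b, p, hib, hbp.symm, hwp ▸ hbx, hwp ▸ hx⟩
  exact ⟨b, hbp, mem_oddDiagram.2 ⟨hxb, Fin.lt_def.2 (by omega), by omega⟩⟩

theorem apply_lt_of_forall_not_mem_oddDiagram (hw : ¬ contains3_12 w) {j x : Fin n}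
    (hx : ∀ r, (r, x) ∉ oddDiagram w) (hj : j < w.symm x) : w j < x := by
  refine lt_of_le_of_ne (not_lt.1 fun hxj => ?_) fun h => ?_
  · obtain ⟨r, -, hr⟩ := exists_mem_oddDiagram_of_lt hw hj hxj
    exact hx r hr
  · rw [← h, symm_apply_apply] at hj
    exact lt_irrefl _ hj

/-- The last cell of a nonempty column `x` lies in the row just above `w⁻¹ x`. -/
theorem apply_eq_of_mem_oddDiagram (hu : ¬ contains3_12 u) (hw : ¬ contains3_12 w)
    (hD : oddDiagram u = oddDiagram w) {r i : Fin n} (h : (r, u i) ∈ oddDiagram u) :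
    u i = w i := by
  have hr := (mem_oddDiagram.1 h).2.1
  have hr' := (mem_oddDiagram.1 (hD ▸ h)).2.1
  obtain ⟨s, hsu, hs⟩ := exists_mem_oddDiagram_of_lt hu hr (mem_oddDiagram.1 h).1
  obtain ⟨t, htw, ht⟩ := exists_mem_oddDiagram_of_lt hw hr' (mem_oddDiagram.1 (hD ▸ h)).1
  have hs' := Fin.lt_def.1 (mem_oddDiagram.1 (hD ▸ hs)).2.1
  have ht' := Fin.lt_def.1 (mem_oddDiagram.1 (hD.symm ▸ ht)).2.1
  refine w.symm_apply_eq.1 (Fin.ext ?_)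
  rw [symm_apply_apply] at hsu ht'
  omega

/-- `w⁻¹ (u i)` can lie neither before `i`, where `w` agrees with `u`, nor after it, since an empty
column holds a left-to-right maximum. -/
theorem apply_le_of_forall_lt_apply_eq (hw : ¬ contains3_12 w) {i : Fin n}
    (hagree : ∀ j < i, u j = w j) (hx : ∀ r, (r, u i) ∉ oddDiagram w) : w i ≤ u i := by
  by_contra! hlt
  rcases lt_trichotomy (w.symm (u i)) i with hk | hk | hk
  · have := hagree _ hk
    rw [w.apply_symm_apply] at this
    exact hk.ne (u.injective this)
  · exact hlt.ne (w.symm_apply_eq.1 hk)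
  · exact (apply_lt_of_forall_not_mem_oddDiagram hw hx hk).not_gt hlt

theorem oddDiagram_injOn : Set.InjOn (oddDiagram (n := n)) {w | ¬ contains3_12 w} := by
  intro u hu w hw hD
  refine Equiv.ext fun i => ?_
  induction i using WellFoundedLT.induction with
  | _ i ih =>
  by_cases hu_col : ∃ r, (r, u i) ∈ oddDiagram u
  · obtain ⟨r, hr⟩ := hu_col
    exact apply_eq_of_mem_oddDiagram hu hw hD hr
  by_cases hw_col : ∃ r, (r, w i) ∈ oddDiagram w
  · obtain ⟨r, hr⟩ := hw_col
    exact (apply_eq_of_mem_oddDiagram hw hu hD.symm hr).symm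
  push Not at hu_col hw_col
  exact le_antisymm (apply_le_of_forall_lt_apply_eq hu (fun j hj => (ih j hj).symm) (hD ▸ hw_col))
    (apply_le_of_forall_lt_apply_eq hw ih (hD ▸ hu_col))

end Avoiding

section Extend

variable (S : Finset (Fin n))

theorem card_finset_fin_lt_add_one : S.card < n + 1 :=
  Nat.lt_succ_of_le (card_finset_fin_le S)

theorem card_compl_map_castSuccEmb : (S.map Fin.castSuccEmb)ᶜ.card = n + 1 - S.card := by
  simp [card_compl]

/-- The values of `S` in the pattern `u`, then the maximum `n`, then the remaining values in
decreasing order. -/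
def extendFun (u : Perm (Fin S.card)) (i : Fin (n + 1)) : Fin (n + 1) :=
  if h : (i : ℕ) < S.card then (S.orderEmbOfFin rfl (u ⟨i, h⟩)).castSucc
  else (S.map Fin.castSuccEmb)ᶜ.orderEmbOfFin (card_compl_map_castSuccEmb S) ⟨n - i, by omega⟩

theorem extendFun_mem_map_iff (u : Perm (Fin S.card)) (i : Fin (n + 1)) :
    extendFun S u i ∈ S.map Fin.castSuccEmb ↔ (i : ℕ) < S.card := by
  unfold extendFun
  split_ifs with h
  · exact iff_of_true (mem_map_of_mem _ (orderEmbOfFin_mem S rfl _)) h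
  · simpa [h] using mem_compl.1 (orderEmbOfFin_mem _ (card_compl_map_castSuccEmb S) _)

theorem extendFun_injective (u : Perm (Fin S.card)) : Function.Injective (extendFun S u) := by
  intro i j hij
  have hS := (extendFun_mem_map_iff S u i).symm.trans (hij ▸ extendFun_mem_map_iff S u j)
  unfold extendFun at hij
  split_ifs at hij with hi hj hj
  · have := u.injective ((S.orderEmbOfFin rfl).injective (Fin.castSucc_injective _ hij))
    simpa [Fin.ext_iff] using this
  · exact absurd (hS.1 hi) hj
  · exact absurd (hS.2 hj) hi
  · have := congrArg Fin.val ((orderEmbOfFin _ _).injective hij)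
    simp only at this
    omega

noncomputable def extendPerm (u : Perm (Fin S.card)) : Perm (Fin (n + 1)) :=
  Equiv.ofBijective _ (Finite.injective_iff_bijective.1 (extendFun_injective S u))

variable {S} {u : Perm (Fin S.card)}

theorem extendPerm_apply_mk (j : Fin S.card) (hj : (j : ℕ) < n + 1) :
    extendPerm S u ⟨j, hj⟩ = (S.orderEmbOfFin rfl (u j)).castSucc :=
  dif_pos j.isLt

theorem extendPerm_apply_card :
    extendPerm S u ⟨S.card, card_finset_fin_lt_add_one S⟩ = Fin.last n := by
  have hlast : Fin.last n ∈ (S.map Fin.castSuccEmb)ᶜ := by simp [Fin.castSucc_ne_last]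
  have hpos : 0 < n + 1 - S.card := Nat.sub_pos_of_lt (card_finset_fin_lt_add_one S)
  have hmax := orderEmbOfFin_last (card_compl_map_castSuccEmb S) hpos
  refine (dif_neg (lt_irrefl _)).trans ?_
  convert hmax.trans (le_antisymm (Fin.le_last _) (le_max' _ _ hlast)) using 2
  ext
  simp only
  omega

theorem extendPerm_symm_last :
    (extendPerm S u).symm (Fin.last n) = ⟨S.card, card_finset_fin_lt_add_one S⟩ :=
  (extendPerm S u).symm_apply_eq.2 extendPerm_apply_card.symm

theorem extendPerm_strictAntiOn : StrictAntiOn (extendPerm S u) {i | S.card ≤ (i : ℕ)} := by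
  intro i (hi : S.card ≤ (i : ℕ)) j (hj : S.card ≤ (j : ℕ)) hij
  change extendFun S u j < extendFun S u i
  unfold extendFun
  rw [dif_neg (not_lt.2 hi), dif_neg (not_lt.2 hj), OrderEmbedding.lt_iff_lt, Fin.mk_lt_mk]
  have := j.isLt
  have := Fin.lt_def.1 hij
  omega

theorem not_contains3_12_extendPerm (hu : ¬ contains3_12 u) : ¬ contains3_12 (extendPerm S u) := by
  rintro ⟨a, b, c, hab, hc, hbc, hca⟩
  rcases lt_trichotomy (c : ℕ) S.card with hck | hck | hck
  · have hord : ∀ (i j : Fin S.card) (hi hj), extendPerm S u ⟨i, hi⟩ < extendPerm S u ⟨j, hj⟩ →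
        u i < u j := fun i j hi hj h => by
      rwa [extendPerm_apply_mk, extendPerm_apply_mk, Fin.castSucc_lt_castSucc_iff,
        OrderEmbedding.lt_iff_lt] at h
    exact hu ⟨⟨a, by omega⟩, ⟨b, by omega⟩, ⟨c, hck⟩, hab, hc, hord _ _ b.isLt c.isLt hbc,
      hord _ _ c.isLt a.isLt hca⟩
  · have : c = ⟨S.card, card_finset_fin_lt_add_one S⟩ := Fin.ext hck
    rw [this, extendPerm_apply_card] at hca
    exact (Fin.le_last _).not_gt hca
  · have hbS : S.card ≤ (b : ℕ) := by omega
    have hcS : S.card ≤ (c : ℕ) := by omega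
    exact hbc.not_gt (extendPerm_strictAntiOn hbS hcS (Fin.lt_def.2 (by omega)))

theorem mem_iff_extendPerm_symm_lt (x : Fin n) :
    x ∈ S ↔ ((extendPerm S u).symm x.castSucc : ℕ) < S.card := by
  rw [← extendFun_mem_map_iff S u]
  change _ ↔ extendPerm S u _ ∈ _
  rw [apply_symm_apply]
  exact (mem_map' Fin.castSuccEmb).symm

end Extend

theorem eq_of_extendPerm_eq {S S' : Finset (Fin n)} {u : Perm (Fin S.card)}
    {u' : Perm (Fin S'.card)} (h : extendPerm S u = extendPerm S' u') : S = S' := by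
  have hcard : S.card = S'.card := by
    simpa [extendPerm_symm_last] using congrArg (fun w => (w.symm (Fin.last n) : ℕ)) h
  ext x
  rw [mem_iff_extendPerm_symm_lt (u := u), mem_iff_extendPerm_symm_lt (u := u'), h, hcard]

theorem extendPerm_injective (S : Finset (Fin n)) : Function.Injective (extendPerm S) := by
  intro u u' h
  have := card_finset_fin_lt_add_one S
  refine Equiv.ext fun j => (S.orderEmbOfFin rfl).injective (Fin.castSucc_injective _ ?_)
  rw [← extendPerm_apply_mk j (by omega), ← extendPerm_apply_mk j (by omega), h]

theorem bell_le_card_not_contains3_12 (n : ℕ) :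
    bell n ≤ Fintype.card {w : Perm (Fin n) // ¬ contains3_12 w} := by
  induction n using Nat.strong_induction_on with
  | _ n ih =>
  cases n with
  | zero =>
    rw [bell]
    exact Fintype.card_pos_iff.2 ⟨⟨1, by rintro ⟨a, -⟩; exact a.elim0⟩⟩
  | succ m =>
    let extend : (Σ S : Finset (Fin m), {u : Perm (Fin S.card) // ¬ contains3_12 u}) →
        {w : Perm (Fin (m + 1)) // ¬ contains3_12 w} :=
      fun p => ⟨extendPerm p.1 p.2.1, not_contains3_12_extendPerm p.2.2⟩
    have extend_injective : Function.Injective extend := by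
      rintro ⟨S, u, hu⟩ ⟨S', u', hu'⟩ h
      have h : extendPerm S u = extendPerm S' u' := congrArg Subtype.val h
      obtain rfl := eq_of_extendPerm_eq h
      obtain rfl := extendPerm_injective S h
      rfl
    calc bell (m + 1) = ∑ S : Finset (Fin m), bell S.card := by
          rw [bell, sum_attach (range (m + 1)) (fun k => m.choose k * bell k), ← powerset_univ,
            sum_powerset_apply_card]
          simp
      _ ≤ ∑ S : Finset (Fin m), Fintype.card {u : Perm (Fin S.card) // ¬ contains3_12 u} :=
          sum_le_sum fun S _ => ih _ (card_finset_fin_lt_add_one S)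
      _ = Fintype.card (Σ S : Finset (Fin m), {u : Perm (Fin S.card) // ¬ contains3_12 u}) :=
          Fintype.card_sigma.symm
      _ ≤ _ := Fintype.card_le_of_injective extend extend_injective

theorem stmt4 (n : ℕ) :
    bell n ≤ ((Finset.univ : Finset (Equiv.Perm (Fin n))).image (fun w => oddDiagram w)).card := by
  calc bell n ≤ Fintype.card {w : Perm (Fin n) // ¬ contains3_12 w} :=
        bell_le_card_not_contains3_12 n
    _ = (univ.filter fun w : Perm (Fin n) => ¬ contains3_12 w).card := Fintype.card_subtype _
    _ ≤ _ := card_le_card_of_injOn _ (fun w _ => mem_image_of_mem _ (mem_univ w))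
        (oddDiagram_injOn.mono fun w hw => (mem_filter.1 hw).2)
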